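/- arXiv:1707.07211 — 3 statements merged into one kernel-verified Lean document; each statement's English description precedes it below -/
import Mathlib

section
/- Let $T \in (0,\pi^2)$, $\mu\in\mathbb{R}$, and $\alpha(z)$ as in the context. Then $\alpha$ is analytic at $\widetilde{z}_c = i\mu - \frac{2i}{T}\sqrt{\pi^2-T}$, vanishes there, and its derivative satisfies $\alpha'(\widetilde{z}_c) = -\frac{T^{3/2}}{4\pi^2}$, i.e. $\alpha(z) = -\frac{T^{3/2}}{4\pi^2}(z-\widetilde{z}_c) + O((z-\widetilde{z}_c)^2)$ near $\widetilde{z}_c$. -/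
/-!
Write the slit as `[c - r, c + r]` and the point as `c - I * h` with `h > 0`. On the ray
`c - I * t`, `t ≥ h`, we have `R ^ 2 = -(t ^ 2 + r ^ 2)`, so `R` is purely imaginary and never
vanishes there; since `R z ~ z` its imaginary part is negative far down the ray, hence everywhere on
it, and `R (c - I * h) = -I * ρ` with `ρ = √(h ^ 2 + r ^ 2)`. Differentiating `R ^ 2 = (z - a)(z - b)`
gives `R' = h / ρ`. The function `α` is the Möbius map `w ↦ I * (w₀ - w) / (1 + w₀ w)` applied to `D`,
so `α' = -I * D' / (1 + D ^ 2)`, and `ρ ^ 2 = h ^ 2 + r ^ 2` reduces this to `-r / (2 ρ ^ 2)`.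
In the theorem `r = 2 / √T`, `h = 2 √(π ^ 2 - T) / T` and `ρ = 2π / T`.
-/

open Filter Topology Complex Set Real

lemma Complex.im_eq_of_mem_segment {a b z : ℂ} (hab : a.im = b.im) (hz : z ∈ segment ℝ a b) :
    z.im = a.im := by
  have : z.im ∈ segment ℝ a.im b.im := by
    rw [← imLm_coe, ← LinearMap.coe_toAffineMap, ← image_segment]
    exact mem_image_of_mem _ hz
  rwa [← hab, segment_same, mem_singleton_iff] at this

lemma neg_of_continuousOn_Ici_of_ne_zero {f : ℝ → ℝ} {a : ℝ} (hf : ContinuousOn f (Ici a))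
    (hne : ∀ x ∈ Ici a, f x ≠ 0) (hlim : ∀ᶠ x in atTop, f x < 0) : f a < 0 := by
  obtain ⟨x, hxa, hx⟩ := ((eventually_ge_atTop a).and hlim).exists
  by_contra! ha
  obtain ⟨y, hy, hy0⟩ := isPreconnected_Ici.intermediate_value hxa self_mem_Ici hf ⟨hx.le, ha⟩
  exact hne y hy hy0

lemma tendsto_const_sub_I_mul_ofReal_atTop_cobounded (c : ℂ) :
    Tendsto (fun h : ℝ => c - I * h) atTop (Bornology.cobounded ℂ) :=
  (tendsto_const_sub_cobounded c).comp
    ((tendsto_mul_left_cobounded I_ne_zero).comp (RCLike.tendsto_ofReal_atTop_cobounded ℂ))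

lemma eventually_im_neg_of_tendsto_div_self {R : ℂ → ℂ}
    (hR : Tendsto (fun z => R z / z) (Bornology.cobounded ℂ) (𝓝 1)) (c : ℂ) :
    ∀ᶠ h : ℝ in atTop, (R (c - I * h)).im < 0 := by
  have hdir : Tendsto (fun h : ℝ => (c - I * h) / h) atTop (𝓝 (-I)) := by
    have : Tendsto (fun h : ℝ => c * ((h : ℂ))⁻¹ - I) atTop (𝓝 (c * 0 - I)) :=
      ((tendsto_inv_atTop_zero.ofReal.congr fun h => (ofReal_inv h)).const_mul c).sub_const I
    rw [mul_zero, zero_sub] at this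
    refine this.congr' ?_
    filter_upwards [eventually_gt_atTop 0] with h hh
    field_simp [ofReal_ne_zero.2 hh.ne']
  have hquot : Tendsto (fun h : ℝ => R (c - I * h) / h) atTop (𝓝 (-I)) := by
    have := (hR.comp (tendsto_const_sub_I_mul_ofReal_atTop_cobounded c)).mul hdir
    rw [one_mul] at this
    refine this.congr' ?_
    filter_upwards [eventually_gt_atTop c.im] with h hh
    have : c - I * h ≠ 0 := fun h0 => by
      have := congrArg im h0
      simp at this
      linarith
    simp only [Function.comp_apply]
    field_simp
  filter_upwards [(continuous_im.tendsto _).comp hquot |>.eventually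
    (gt_mem_nhds (by simp : (-I).im < 0)), eventually_gt_atTop 0] with h h1 h2
  simp only [Function.comp_apply, div_ofReal_im] at h1
  simpa using (div_lt_iff₀ h2).1 h1

theorem DifferentiableAt.hasDerivAt_of_sq_eq {𝕜 : Type*} [NontriviallyNormedField 𝕜] [CharZero 𝕜]
    {R f : 𝕜 → 𝕜} {z₀ f' : 𝕜} (hR : DifferentiableAt 𝕜 R z₀) (hf : HasDerivAt f f' z₀)
    (hsq : ∀ᶠ z in 𝓝 z₀, R z ^ 2 = f z) (hR₀ : R z₀ ≠ 0) :
    HasDerivAt R (f' / (2 * R z₀)) z₀ := by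
  have h := (hR.hasDerivAt.pow 2).unique (hf.congr_of_eventuallyEq hsq)
  rw [← h, Nat.cast_ofNat, pow_one, mul_div_cancel_left₀ _ (mul_ne_zero two_ne_zero hR₀)]
  exact hR.hasDerivAt

theorem hasDerivAt_mul_sub_div_one_add_mul {𝕜 : Type*} [NontriviallyNormedField 𝕜] {g : 𝕜 → 𝕜}
    {z₀ g' : 𝕜} (k : 𝕜) (hg : HasDerivAt g g' z₀) (hden : 1 + g z₀ ^ 2 ≠ 0) :
    HasDerivAt (fun z => k * (g z₀ - g z) / (1 + g z₀ * g z)) (-(k * g') / (1 + g z₀ ^ 2)) z₀ := by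
  have hden' : 1 + g z₀ * g z₀ ≠ 0 := by rwa [← sq]
  refine (((hg.const_sub (g z₀)).const_mul k).fun_div ((hg.const_mul (g z₀)).const_add 1)
    hden').congr_deriv ?_
  rw [sub_self, mul_zero, zero_mul, sub_zero, ← sq, sq (1 + _), mul_div_mul_right _ _ hden]
  ring

structure IsSlitSqrt (c : ℂ) (r : ℝ) (R : ℂ → ℂ) : Prop where
  analyticAt : ∀ z ∉ segment ℝ (c - r) (c + r), AnalyticAt ℂ R z
  sq_eq : ∀ z ∉ segment ℝ (c - r) (c + r), R z ^ 2 = (z - (c - r)) * (z - (c + r))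
  tendsto_div_self : Tendsto (fun z => R z / z) (Bornology.cobounded ℂ) (𝓝 1)

lemma eventually_notMem_segment_nhds_sub_I_mul (c : ℂ) (r : ℝ) {h : ℝ} (hh : 0 < h) :
    ∀ᶠ z in 𝓝 (c - I * h), z ∉ segment ℝ (c - r) (c + r) := by
  have him : (c - I * h).im ≠ c.im := by simpa using hh.ne'
  filter_upwards [(isOpen_ne_fun continuous_im continuous_const).mem_nhds him] with z hz hmem
  exact hz (by simpa using im_eq_of_mem_segment (by simp) hmem)

namespace IsSlitSqrt

variable {c : ℂ} {r h : ℝ} {R : ℂ → ℂ}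

theorem apply_sub_I_mul (hR : IsSlitSqrt c r R) (hh : 0 < h) :
    R (c - I * h) = -(I * √(h ^ 2 + r ^ 2)) := by
  have hray : ∀ t ∈ Ici h, c - I * t ∉ segment ℝ (c - r) (c + r) := fun t ht =>
    (eventually_notMem_segment_nhds_sub_I_mul c r (hh.trans_le ht)).self_of_nhds
  have hsign : ∀ t ∈ Ici h, R (c - I * t) = I * √(t ^ 2 + r ^ 2) ∨
      R (c - I * t) = -(I * √(t ^ 2 + r ^ 2)) := fun t ht => by
    refine sq_eq_sq_iff_eq_or_eq_neg.1 ?_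
    rw [hR.sq_eq _ (hray t ht), mul_pow, I_sq, ← ofReal_pow, Real.sq_sqrt (by positivity)]
    push_cast
    linear_combination (t : ℂ) ^ 2 * I_sq
  have hroot_pos : ∀ t ∈ Ici h, 0 < √(t ^ 2 + r ^ 2) := fun t ht =>
    Real.sqrt_pos.2 (by nlinarith [mem_Ici.1 ht, sq_nonneg r])
  have him_neg : (R (c - I * h)).im < 0 := by
    refine neg_of_continuousOn_Ici_of_ne_zero (f := fun t : ℝ => (R (c - I * t)).im) ?_ ?_
      (eventually_im_neg_of_tendsto_div_self hR.tendsto_div_self c)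
    · intro t ht
      have hline : ContinuousAt (fun t : ℝ => c - I * t) t := by fun_prop
      exact (continuous_im.continuousAt.comp ((hR.analyticAt _ (hray t ht)).continuousAt.comp
        (f := fun t : ℝ => c - I * t) hline)).continuousWithinAt
    · intro t ht
      rcases hsign t ht with h' | h' <;> simp [h', (hroot_pos t ht).ne']
  refine (hsign h self_mem_Ici).resolve_left fun h' => ?_
  rw [h'] at him_neg
  simp at him_neg
  linarith [hroot_pos h self_mem_Ici]

theorem hasDerivAt_sub_I_mul (hR : IsSlitSqrt c r R) (hh : 0 < h) :
    HasDerivAt R (h / √(h ^ 2 + r ^ 2)) (c - I * h) := by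
  have hroot : (√(h ^ 2 + r ^ 2) : ℂ) ≠ 0 :=
    ofReal_ne_zero.2 (Real.sqrt_pos.2 (by positivity)).ne'
  have hf : HasDerivAt (fun z => (z - (c - r)) * (z - (c + r))) (2 * (c - I * h - c))
      (c - I * h) := by
    refine (((hasDerivAt_id _).sub_const _).mul ((hasDerivAt_id _).sub_const _)).congr_deriv ?_
    ring
  have hnear := eventually_notMem_segment_nhds_sub_I_mul c r hh
  refine ((hR.analyticAt _ hnear.self_of_nhds).differentiableAt.hasDerivAt_of_sq_eq hf
    (hnear.mono hR.sq_eq) ?_).congr_deriv ?_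
  · simpa [hR.apply_sub_I_mul hh] using hroot
  · rw [hR.apply_sub_I_mul hh]
    field_simp
    ring

theorem analyticAt_and_hasDerivAt_mobius (hR : IsSlitSqrt c r R) (hr : r ≠ 0) (hh : 0 < h)
    {D : ℂ → ℂ} (hD : ∀ z, D z = (z - c + R z) / (I * r)) :
    AnalyticAt ℂ (fun z => I * (D (c - I * h) - D z) / (1 + D (c - I * h) * D z)) (c - I * h) ∧
      HasDerivAt (fun z => I * (D (c - I * h) - D z) / (1 + D (c - I * h) * D z))
        (-r / (2 * (h ^ 2 + r ^ 2))) (c - I * h) := by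
  set ρ := √(h ^ 2 + r ^ 2)
  have hρ : 0 < ρ := Real.sqrt_pos.2 (by positivity)
  have hρ2 : (ρ : ℂ) ^ 2 = h ^ 2 + r ^ 2 := by exact_mod_cast Real.sq_sqrt (by positivity)
  have hr' : (r : ℂ) ≠ 0 := ofReal_ne_zero.2 hr
  have hD₀ : D (c - I * h) = -((h + ρ) / r) := by
    rw [hD, hR.apply_sub_I_mul hh]
    field_simp
    ring
  have hD' : HasDerivAt D ((1 + h / ρ) / (I * r)) (c - I * h) := by
    rw [funext hD]
    exact (((hasDerivAt_id _).sub_const c).add (hR.hasDerivAt_sub_I_mul hh)).div_const _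
  have hden_eq : 1 + D (c - I * h) ^ 2 = 2 * ρ * (ρ + h) / r ^ 2 := by
    rw [hD₀]
    field_simp
    linear_combination -hρ2
  have hden : 1 + D (c - I * h) ^ 2 ≠ 0 := by
    rw [hden_eq]
    exact_mod_cast (by positivity : (0 : ℝ) < 2 * ρ * (ρ + h) / r ^ 2).ne'
  have hDan : AnalyticAt ℂ D (c - I * h) := by
    rw [funext hD]
    exact ((analyticAt_id.sub analyticAt_const).add
      (hR.analyticAt _ (eventually_notMem_segment_nhds_sub_I_mul c r hh).self_of_nhds)).div_const
  refine ⟨(analyticAt_const.mul (analyticAt_const.sub hDan)).div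
    (analyticAt_const.add (analyticAt_const.mul hDan)) (by rwa [← sq]),
    (hasDerivAt_mul_sub_div_one_add_mul I hD' hden).congr_deriv ?_⟩
  have hρ' : (ρ : ℂ) ≠ 0 := ofReal_ne_zero.2 hρ.ne'
  have hρh : (ρ : ℂ) + h ≠ 0 := by exact_mod_cast (by positivity : (0 : ℝ) < ρ + h).ne'
  rw [hden_eq, ← hρ2]
  field_simp

end IsSlitSqrt

theorem stmt6 (T μ : ℝ) (hT : 0 < T) (hT2 : T < Real.pi ^ 2)
    (a b ztc : ℂ) (ha : a = -(2 / Real.sqrt T) + Complex.I * μ)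
    (hb : b = 2 / Real.sqrt T + Complex.I * μ)
    (hz : ztc = Complex.I * μ - (2 * Complex.I / T) * Real.sqrt (Real.pi ^ 2 - T))
    (R : ℂ → ℂ)
    (hRan : ∀ z ∉ segment ℝ a b, AnalyticAt ℂ R z)
    (hRsq : ∀ z ∉ segment ℝ a b, R z ^ 2 = (z - a) * (z - b))
    (hRinf : Tendsto (fun z => R z / z) (Bornology.cobounded ℂ) (nhds 1))
    (D : ℂ → ℂ)
    (hD : ∀ z, D z = (Real.sqrt T / (2 * Complex.I)) * (z - Complex.I * μ + R z))
    (α : ℂ → ℂ)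
    (hα : ∀ z, α z = Complex.I * (D ztc - D z) / (1 + D ztc * D z)) :
    AnalyticAt ℂ α ztc ∧ α ztc = 0 ∧
      deriv α ztc = -((T * Real.sqrt T : ℝ) : ℂ) / (4 * Real.pi ^ 2) := by
  have hq : 0 < √T := Real.sqrt_pos.2 hT
  have hp : 0 < √(π ^ 2 - T) := Real.sqrt_pos.2 (by linarith)
  have hq2 : √T ^ 2 = T := Real.sq_sqrt hT.le
  have hp2 : √(π ^ 2 - T) ^ 2 = π ^ 2 - T := Real.sq_sqrt (by linarith)
  set q := √T
  set p := √(π ^ 2 - T)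
  set c : ℂ := I * μ
  obtain rfl : a = c - ↑(2 / q) := by rw [ha]; push_cast; ring
  obtain rfl : b = c + ↑(2 / q) := by rw [hb]; push_cast; ring
  obtain rfl : ztc = c - I * ↑(2 * p / T) := by rw [hz]; push_cast; ring
  have hD' : ∀ z, D z = (z - c + R z) / (I * ↑(2 / q)) := fun z => by
    rw [hD]
    push_cast
    field_simp
  obtain ⟨han, hder⟩ := IsSlitSqrt.analyticAt_and_hasDerivAt_mobius ⟨hRan, hRsq, hRinf⟩
    (by positivity) (by positivity : 0 < 2 * p / T) hD'
  rw [funext hα]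
  refine ⟨han, by simp, hder.deriv.trans ?_⟩
  have hval : -(2 / q) / (2 * ((2 * p / T) ^ 2 + (2 / q) ^ 2)) = -(T * q) / (4 * π ^ 2) := by
    field_simp
    linear_combination 4 * p ^ 2 * hq2 + 4 * T * hp2
  exact_mod_cast hval
end

section
/- Let $T\in(0,\pi^2)$ and $k \geq 0$ an integer. With $\gamma_* = \frac{1}{\sqrt\pi}(\sqrt{\pi^2-T}+i\sqrt{T})^{1/2}$ and $\rho := \frac{\alpha_*}{W_*} = \frac{-T}{(2\pi)^{3/2}(\pi^2-T)^{1/4}}$, the $2\times 2$ matrix $F_0 = \alpha_\infty^{-k\sigma_3} M \rho^{k\sigma_3}$, where $M = \begin{pmatrix} \frac{\gamma_*+\gamma_*^{-1}}{2} & \frac{\gamma_*-\gamma_*^{-1}}{-2i} \\ \frac{\gamma_*-\gamma_*^{-1}}{2i} & \frac{\gamma_*+\gamma_*^{-1}}{2}\end{pmatrix}$, $\alpha_\infty = \frac{\sqrt{\pi^2-T}+\pi}{\sqrt{T}}i$, and $\sigma_3 = \mathrm{diag}(1,-1)$, satisfies $\det F_0 = 1$, $(F_0)_{11}(F_0)_{21}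 = \frac{T^{(4k+1)/2}}{(2\pi)^{3k+1}(\pi^2-T)^{k/2}}$, and $(F_0)_{12}(F_0)_{22} = -\frac{(2\pi)^{3k-1}(\pi^2-T)^{k/2}}{T^{(4k-1)/2}}$. -/
/-!
Conjugation by `diag(α⁻ᵏ, αᵏ)` and `diag(ρᵏ, ρ⁻ᵏ)` preserves the determinant and multiplies the
product of the two entries of the first (second) column by `ρ²ᵏ` (`ρ⁻²ᵏ`), so `α_∞` drops out
entirely. For `M` the determinant is `1` and the column products are `±(γ² - γ⁻²)/(4i)`. Since
`γ² = (√(π² - T) + i√T)/π` has modulus one, `γ⁻²` is its conjugate and `γ² - γ⁻² = 2i√T/π`;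
together with `ρ² = T²/((2π)³√(π² - T))` both identities reduce to collecting powers of `√T`.
-/

open Matrix Real

section DiagonalConjugation

variable {K : Type*} [Field K] (x y : K) (M : Matrix (Fin 2) (Fin 2) K)

theorem diag_inv_mul_mul_diag_inv :
    !![x⁻¹, 0; 0, x] * M * !![y, 0; 0, y⁻¹] =
      !![x⁻¹ * M 0 0 * y, x⁻¹ * M 0 1 * y⁻¹; x * M 1 0 * y, x * M 1 1 * y⁻¹] := by
  rw [M.eta_fin_two]
  simp

theorem det_diag_inv_mul_mul_diag_inv (hx : x ≠ 0) (hy : y ≠ 0) :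
    (!![x⁻¹, 0; 0, x] * M * !![y, 0; 0, y⁻¹]).det = M.det := by
  simp only [det_mul, det_fin_two_of, mul_zero, sub_zero, inv_mul_cancel₀ hx,
    mul_inv_cancel₀ hy, one_mul, mul_one]

theorem diag_inv_mul_mul_diag_inv_col_zero_prod (hx : x ≠ 0) :
    (!![x⁻¹, 0; 0, x] * M * !![y, 0; 0, y⁻¹]) 0 0 *
      (!![x⁻¹, 0; 0, x] * M * !![y, 0; 0, y⁻¹]) 1 0 = M 0 0 * M 1 0 * y ^ 2 := by
  rw [diag_inv_mul_mul_diag_inv]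
  simp only [of_apply, cons_val', cons_val_zero, cons_val_one, empty_val', cons_val_fin_one]
  linear_combination (M 0 0 * M 1 0 * y ^ 2) * inv_mul_cancel₀ hx

theorem diag_inv_mul_mul_diag_inv_col_one_prod (hx : x ≠ 0) :
    (!![x⁻¹, 0; 0, x] * M * !![y, 0; 0, y⁻¹]) 0 1 *
      (!![x⁻¹, 0; 0, x] * M * !![y, 0; 0, y⁻¹]) 1 1 = M 0 1 * M 1 1 * y⁻¹ ^ 2 := by
  rw [diag_inv_mul_mul_diag_inv]
  simp only [of_apply, cons_val', cons_val_zero, cons_val_one, empty_val', cons_val_fin_one]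
  linear_combination (M 0 1 * M 1 1 * y⁻¹ ^ 2) * inv_mul_cancel₀ hx

end DiagonalConjugation

noncomputable def gammaMatrix (γ : ℂ) : Matrix (Fin 2) (Fin 2) ℂ :=
  !![(γ + γ⁻¹) / 2, (γ - γ⁻¹) / (-2 * Complex.I);
     (γ - γ⁻¹) / (2 * Complex.I), (γ + γ⁻¹) / 2]

section GammaMatrix

variable {γ : ℂ}

theorem det_gammaMatrix (hγ : γ ≠ 0) : (gammaMatrix γ).det = 1 := by
  have h4 : -2 * Complex.I * (2 * Complex.I) = 4 := by linear_combination (-4 : ℂ) * Complex.I_sq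
  rw [gammaMatrix, det_fin_two_of, div_mul_div_comm, div_mul_div_comm, h4]
  linear_combination mul_inv_cancel₀ hγ

theorem gammaMatrix_col_zero_prod :
    gammaMatrix γ 0 0 * gammaMatrix γ 1 0 = (γ ^ 2 - γ⁻¹ ^ 2) / (4 * Complex.I) := by
  simp only [gammaMatrix, of_apply, cons_val', cons_val_zero, cons_val_one, empty_val',
    cons_val_fin_one]
  field_simp
  ring

theorem gammaMatrix_col_one_prod :
    gammaMatrix γ 0 1 * gammaMatrix γ 1 1 = -((γ ^ 2 - γ⁻¹ ^ 2) / (4 * Complex.I)) := by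
  simp only [gammaMatrix, of_apply, cons_val', cons_val_zero, cons_val_one, empty_val',
    cons_val_fin_one]
  field_simp
  ring

theorem sq_sub_inv_sq_of_sq_eq {s t p : ℝ} (hp : p ≠ 0) (hst : s ^ 2 + t ^ 2 = p ^ 2)
    (hγ : γ ^ 2 = (s + Complex.I * t) / p) : γ ^ 2 - γ⁻¹ ^ 2 = 2 * Complex.I * t / p := by
  have hp' : (p : ℂ) ≠ 0 := by exact_mod_cast hp
  have hst' : (s : ℂ) ^ 2 + (t : ℂ) ^ 2 = (p : ℂ) ^ 2 := by exact_mod_cast hst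
  have hinv : γ⁻¹ ^ 2 = (s - Complex.I * t) / p := by
    rw [inv_pow, hγ]
    apply inv_eq_of_mul_eq_one_right
    field_simp
    linear_combination hst' - (t : ℂ) ^ 2 * Complex.I_sq
  rw [hγ, hinv]
  ring

end GammaMatrix

theorem sq_neg_div_rpow_three_halves_mul_rpow_quarter (T : ℝ) {c u : ℝ} (hc : 0 ≤ c)
    (hu : 0 ≤ u) :
    (-T / (c ^ ((3 : ℝ) / 2) * u ^ ((1 : ℝ) / 4))) ^ 2 = T ^ 2 / (c ^ 3 * √u) := by
  have hc3 : (c ^ ((3 : ℝ) / 2)) ^ 2 = c ^ 3 := by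
    rw [← rpow_mul_natCast hc]; norm_num
  have hu4 : (u ^ ((1 : ℝ) / 4)) ^ 2 = √u := by
    rw [← rpow_mul_natCast hu, sqrt_eq_rpow]; norm_num
  rw [div_pow, mul_pow, hc3, hu4, neg_sq]

theorem sq_one_div_sqrt_mul_cpow_half {p : ℝ} (hp : 0 ≤ p) (w : ℂ) :
    ((1 / (√p : ℂ)) * w ^ (1 / 2 : ℂ)) ^ 2 = w / p := by
  have hw : (w ^ (1 / 2 : ℂ)) ^ 2 = w := by
    simpa only [one_div, Nat.cast_ofNat] using Complex.cpow_nat_inv_pow w two_ne_zero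
  rw [mul_pow, hw, div_pow, one_pow, ← Complex.ofReal_pow, sq_sqrt hp]
  ring

theorem rpow_four_mul_add_one_div_two_div {T c u : ℝ} (hT : 0 < T) (hc : c ≠ 0) (hu : 0 < u)
    (k : ℕ) :
    T ^ ((4 * (k : ℝ) + 1) / 2) / (c ^ (3 * k + 1) * u ^ ((k : ℝ) / 2)) =
      √T / c * (T ^ 2 / (c ^ 3 * √u)) ^ k := by
  have hT4 : T ^ 2 = √T ^ 4 := by rw [show 4 = 2 * 2 from rfl, pow_mul, sq_sqrt hT.le]
  have hu' : 0 < √u := sqrt_pos.2 hu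
  rw [rpow_div_two_eq_sqrt _ hT.le, rpow_div_two_eq_sqrt _ hu.le, hT4,
    show 4 * (k : ℝ) + 1 = ((4 * k + 1 : ℕ) : ℝ) by push_cast; ring, rpow_natCast, rpow_natCast,
    div_pow, mul_pow, ← pow_mul, ← pow_mul]
  field_simp
  ring

theorem zpow_mul_rpow_div_rpow_four_mul_sub_one_div_two {T c u : ℝ} (hT : 0 < T) (hc : c ≠ 0)
    (hu : 0 < u) (k : ℕ) :
    c ^ (3 * (k : ℤ) - 1) * u ^ ((k : ℝ) / 2) / T ^ ((4 * (k : ℝ) - 1) / 2) =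
      √T / c * ((T ^ 2 / (c ^ 3 * √u)) ^ k)⁻¹ := by
  have hT4 : T ^ 2 = √T ^ 4 := by rw [show 4 = 2 * 2 from rfl, pow_mul, sq_sqrt hT.le]
  have ht : 0 < √T := sqrt_pos.2 hT
  have hu' : 0 < √u := sqrt_pos.2 hu
  rw [rpow_div_two_eq_sqrt _ hT.le, rpow_div_two_eq_sqrt _ hu.le, rpow_sub ht, rpow_one,
    zpow_sub₀ hc, zpow_one, hT4, show 4 * (k : ℝ) = ((4 * k : ℕ) : ℝ) by push_cast; ring,
    rpow_natCast, rpow_natCast, show 3 * (k : ℤ) = ((3 * k : ℕ) : ℤ) by push_cast; ring,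
    zpow_natCast, div_pow, mul_pow, ← pow_mul, ← pow_mul]
  field_simp

theorem stmt15 (T : ℝ) (hT : 0 < T) (hT2 : T < Real.pi ^ 2) (k : ℕ)
    (γ ρ αinf : ℂ)
    (hγ : γ = (1 / (Real.sqrt Real.pi : ℂ)) *
      ((Real.sqrt (Real.pi ^ 2 - T) + Complex.I * Real.sqrt T) ^ (1 / 2 : ℂ)))
    (hρ : ρ = (-T / ((2 * Real.pi) ^ ((3 : ℝ) / 2) * (Real.pi ^ 2 - T) ^ ((1 : ℝ) / 4)) : ℝ))
    (hαinf : αinf = ((Real.sqrt (Real.pi ^ 2 - T) + Real.pi) / Real.sqrt T) * Complex.I)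
    (M F0 : Matrix (Fin 2) (Fin 2) ℂ)
    (hM : M = !![(γ + γ⁻¹) / 2, (γ - γ⁻¹) / (-2 * Complex.I);
                 (γ - γ⁻¹) / (2 * Complex.I), (γ + γ⁻¹) / 2])
    (hF0 : F0 = !![αinf ^ (-(k : ℤ)), 0; 0, αinf ^ (k : ℤ)] * M *
                !![ρ ^ (k : ℤ), 0; 0, ρ ^ (-(k : ℤ))]) :
    F0.det = 1 ∧
      F0 0 0 * F0 1 0 =
        ((T ^ ((4 * (k : ℝ) + 1) / 2) /
          ((2 * Real.pi) ^ (3 * k + 1) * (Real.pi ^ 2 - T) ^ ((k : ℝ) / 2)) : ℝ) : ℂ) ∧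
      F0 0 1 * F0 1 1 =
        -(((2 * Real.pi) ^ (3 * (k : ℤ) - 1) * (Real.pi ^ 2 - T) ^ ((k : ℝ) / 2) /
          T ^ ((4 * (k : ℝ) - 1) / 2) : ℝ) : ℂ) := by
  have hπ : 0 < π := pi_pos
  have hu : 0 < π ^ 2 - T := by linarith
  have hγsq : γ ^ 2 = (√(π ^ 2 - T) + Complex.I * √T) / π := by
    rw [hγ]; exact sq_one_div_sqrt_mul_cpow_half hπ.le _
  have hγdiff : γ ^ 2 - γ⁻¹ ^ 2 = 2 * Complex.I * √T / π :=
    sq_sub_inv_sq_of_sq_eq hπ.ne' (by rw [sq_sqrt hu.le, sq_sqrt hT.le]; ring) hγsq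
  have hγ0 : γ ≠ 0 := by
    rintro rfl
    exact (div_pos (sqrt_pos.2 hT) hπ).ne (by simpa using congrArg Complex.im hγsq)
  have hα0 : αinf ≠ 0 := by
    rw [hαinf]
    exact mul_ne_zero (by exact_mod_cast (by positivity : (√(π ^ 2 - T) + π) / √T ≠ 0))
      Complex.I_ne_zero
  have hρ0 : ρ ≠ 0 := by
    rw [hρ, Complex.ofReal_ne_zero]
    exact div_ne_zero (neg_ne_zero.2 hT.ne') (by positivity)
  have hρsq : (ρ ^ k) ^ 2 = (((T ^ 2 / ((2 * π) ^ 3 * √(π ^ 2 - T))) ^ k : ℝ) : ℂ) := by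
    rw [← pow_mul, mul_comm, pow_mul, hρ, ← Complex.ofReal_pow, ← Complex.ofReal_pow,
      sq_neg_div_rpow_three_halves_mul_rpow_quarter _ (by positivity) hu.le]
  rw [_root_.zpow_neg, _root_.zpow_neg, zpow_natCast, zpow_natCast] at hF0
  have hM' : M = gammaMatrix γ := hM
  subst hF0 hM'
  refine ⟨?_, ?_, ?_⟩
  · rw [det_diag_inv_mul_mul_diag_inv _ _ _ (pow_ne_zero k hα0) (pow_ne_zero k hρ0),
      det_gammaMatrix hγ0]
  · rw [diag_inv_mul_mul_diag_inv_col_zero_prod _ _ _ (pow_ne_zero k hα0),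
      gammaMatrix_col_zero_prod, hγdiff, hρsq,
      rpow_four_mul_add_one_div_two_div hT (by positivity) hu]
    push_cast
    field_simp
    ring
  · rw [diag_inv_mul_mul_diag_inv_col_one_prod _ _ _ (pow_ne_zero k hα0),
      gammaMatrix_col_one_prod, hγdiff, inv_pow, hρsq,
      zpow_mul_rpow_div_rpow_four_mul_sub_one_div_two hT (by positivity) hu]
    push_cast
    field_simp
    ring
end

section
/- Let $B$ be a $2\times 2$ complex matrix, $F_0, F_1$ be $2\times 2$ complex matrices with $F_0$ invertible, $Q$ a strictly upper triangular matrix $\begin{pmatrix} 0 & q \\ 0 & 0 \end{pmatrix}$ with $q \ne 0$, and $W_1 \ne 0$ a complex scalar with $W_1 + q\,(F_0^{-1}F_1)_{21} \neq 0$. If $B$ satisfies the two matrix equations $B F_0 Q = 0$ and $B F_0 + \frac{1}{W_1}F_0 Q + \frac{1}{W_1} B F_1 Q = 0$, then $B = \frac{-F_0 Q F_0^{-1}}{W_1 + q\,(F_0^{-1}F_1)_{21}}$. -/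
open Matrix

/-
With `D = B F₀` and `M = F₀⁻¹ F₁`, the first equation `D Q = 0` says that the first column of `D`
vanishes. For such `D`, right multiplication by `M Q` only sees the entry `M₁₀`, so
`B F₁ Q = D M Q = (q M₁₀) • D`. The second equation then becomes the scalar-linear equation
`(W₁ + q M₁₀) • D = -F₀ Q`, which is solved for `D` and then for `B = D F₀⁻¹`.
-/

namespace Matrix

variable {R : Type*}

theorem apply_zero_eq_zero_of_mul_strictUpper_eq_zero [Semiring R] [NoZeroDivisors R]
    {D : Matrix (Fin 2) (Fin 2) R} {q : R} (hq : q ≠ 0) (h : D * !![0, q; 0, 0] = 0)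
    (i : Fin 2) : D i 0 = 0 := by
  have hi : D i 0 * q = 0 := by
    simpa [mul_apply, Fin.sum_univ_two] using congrFun (congrFun h i) 1
  exact (mul_eq_zero.mp hi).resolve_right hq

theorem mul_mul_strictUpper_of_apply_zero_eq_zero [CommSemiring R]
    {D : Matrix (Fin 2) (Fin 2) R} (hD : ∀ i, D i 0 = 0) (M : Matrix (Fin 2) (Fin 2) R) (q : R) :
    D * M * !![0, q; 0, 0] = (q * M 1 0) • D := by
  ext i j
  fin_cases j
  · simp [mul_apply, Fin.sum_univ_two, hD]
  · simp only [Fin.mk_one, mul_apply, Fin.sum_univ_two, hD, of_apply, cons_val', cons_val_one,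
      cons_val_zero, cons_val_fin_one, smul_apply, smul_eq_mul]
    ring

end Matrix

theorem stmt18 (B F0 F1 Q : Matrix (Fin 2) (Fin 2) ℂ) (q W1 : ℂ)
    (hq : q ≠ 0) (hW : W1 ≠ 0)
    (hQ : Q = !![0, q; 0, 0])
    (hF0 : IsUnit F0)
    (hden : W1 + q * (F0⁻¹ * F1) 1 0 ≠ 0)
    (h1 : B * F0 * Q = 0)
    (h2 : B * F0 + W1⁻¹ • (F0 * Q) + W1⁻¹ • (B * F1 * Q) = 0) :
    B = (-(W1 + q * (F0⁻¹ * F1) 1 0)⁻¹) • (F0 * Q * F0⁻¹) := by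
  have hinv : F0 * F0⁻¹ = 1 := mul_nonsing_inv F0 ((isUnit_iff_isUnit_det F0).mp hF0)
  set c := q * (F0⁻¹ * F1) 1 0
  subst hQ
  have hBF1 : B * F1 * !![0, q; 0, 0] = c • (B * F0) := by
    rw [← mul_mul_strictUpper_of_apply_zero_eq_zero
      (apply_zero_eq_zero_of_mul_strictUpper_eq_zero hq h1), mul_assoc B F0,
      ← mul_assoc F0, hinv, one_mul]
  have hD : (W1 + c) • (B * F0) = -(F0 * !![0, q; 0, 0]) := by
    rw [hBF1, smul_smul] at h2
    have := congrArg (W1 • ·) h2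
    simp only [smul_add, smul_smul, mul_inv_cancel₀ hW, mul_inv_cancel_left₀ hW, one_smul,
      smul_zero] at this
    rw [add_smul, eq_neg_iff_add_eq_zero, ← this]
    abel
  have hBF0 : B * F0 = (-(W1 + c)⁻¹) • (F0 * !![0, q; 0, 0]) := by
    rw [neg_smul, ← smul_neg, ← hD, smul_smul, inv_mul_cancel₀ hden, one_smul]
  calc B = B * F0 * F0⁻¹ := by rw [mul_assoc, hinv, mul_one]
    _ = _ := by rw [hBF0, smul_mul]
end
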